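/- arXiv:2207.01062 — 5 statements merged into one kernel-verified Lean document; each statement's English description precedes it below -/
import Mathlib

section
/- Let x_1,…,x_m ∈ ℝ^d with ‖x_k‖² ≤ R for all k, and let γ > 0 satisfy 2γR ≤ 1. Define P = I − (2γ/m) Σ_{k=1}^m x_k x_k^⊤. Then P^⊤ P + (2γ/m) Σ_{k=1}^m x_k x_k^⊤ ⪯ I (in the Loewner order). -/
open Matrix Finset

lemma mulVec_vecMulVec_sum {d m : ℕ} (x : Fin m → (Fin d → ℝ)) (v : Fin d → ℝ) :
    (∑ k, vecMulVec (x k) (x k)) *ᵥ v = ∑ k, (x k ⬝ᵥ v) • x k := by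
  ext i
  simp only [Matrix.mulVec, dotProduct, Matrix.sum_apply, Finset.sum_apply, vecMulVec_apply,
    Pi.smul_apply, smul_eq_mul, Finset.sum_mul, Finset.mul_sum]
  rw [Finset.sum_comm]
  exact Finset.sum_congr rfl fun k _ => Finset.sum_congr rfl fun j _ => by ring

lemma quad_form_aux {d m : ℕ} (x : Fin m → (Fin d → ℝ)) (c : ℝ) (v : Fin d → ℝ) :
    v ⬝ᵥ (c • ∑ k, vecMulVec (x k) (x k)) *ᵥ v
      = c * ∑ k, (∑ i, x k i * v i) ^ 2 := by
  rw [Matrix.smul_mulVec, dotProduct_smul, mulVec_vecMulVec_sum, smul_eq_mul]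
  congr 1
  simp only [dotProduct, Finset.sum_apply, Pi.smul_apply, smul_eq_mul, Finset.mul_sum]
  rw [Finset.sum_comm]
  refine Finset.sum_congr rfl fun k _ => ?_
  rw [pow_two, Finset.sum_mul]
  refine Finset.sum_congr rfl fun i _ => ?_
  have h : v i * ((∑ j, x k j * v j) * x k i) = (x k i * v i) * ∑ j, x k j * v j := by ring
  rw [h, Finset.mul_sum]

/-- If `‖x_k‖² ≤ R` and `2γR ≤ 1`, then for `P = I − (2γ/m) Σ_k x_k x_kᵀ` we have
`Pᵀ P + (2γ/m) Σ_k x_k x_kᵀ ⪯ I` in the Loewner order. -/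
theorem stmt_3 {d m : ℕ} (hm : 0 < m) (x : Fin m → (Fin d → ℝ)) (R γ : ℝ)
    (hγ : 0 < γ) (hR : ∀ k, ∑ i, (x k i) ^ 2 ≤ R) (hγR : 2 * γ * R ≤ 1) :
    ((1 : Matrix (Fin d) (Fin d) ℝ) -
      (((1 - (2 * γ / m) • ∑ k, vecMulVec (x k) (x k))ᵀ *
        (1 - (2 * γ / m) • ∑ k, vecMulVec (x k) (x k)))
       + (2 * γ / m) • ∑ k, vecMulVec (x k) (x k))).PosSemidef := by
  set S : Matrix (Fin d) (Fin d) ℝ := (2 * γ / m) • ∑ k, vecMulVec (x k) (x k) with hSdef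
  have hSherm : S.IsHermitian := by
    ext i j
    simp only [hSdef, Matrix.conjTranspose_apply, Matrix.smul_apply, Matrix.sum_apply,
      vecMulVec_apply, star_trivial, smul_eq_mul]
    congr 1
    exact Finset.sum_congr rfl fun k _ => mul_comm _ _
  have hc : (0:ℝ) ≤ 2 * γ / m := by positivity
  have hSpsd : S.PosSemidef := by
    refine .of_dotProduct_mulVec_nonneg hSherm fun v => ?_
    simp only [star_trivial, hSdef]
    rw [quad_form_aux]
    positivity
  have hIS : ((1 : Matrix (Fin d) (Fin d) ℝ) - S).PosSemidef := by
    refine .of_dotProduct_mulVec_nonneg (Matrix.isHermitian_one.sub hSherm) fun v => ?_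
    simp only [star_trivial, Matrix.sub_mulVec, dotProduct_sub, Matrix.one_mulVec, hSdef]
    rw [quad_form_aux]
    have hsum : ∑ k, (∑ i, x k i * v i) ^ 2 ≤ ∑ _k : Fin m, R * ∑ i, v i ^ 2 := by
      refine Finset.sum_le_sum fun k _ => ?_
      have h1 : (∑ i, x k i * v i) ^ 2 ≤ (∑ i, x k i ^ 2) * ∑ i, v i ^ 2 :=
        Finset.sum_mul_sq_le_sq_mul_sq Finset.univ (x k) v
      have h2 : (0:ℝ) ≤ ∑ i, v i ^ 2 := by positivity
      nlinarith [hR k]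
    have hvv : v ⬝ᵥ v = ∑ i, v i ^ 2 := by simp [dotProduct, pow_two]
    rw [hvv]
    simp only [Finset.sum_const, Finset.card_univ, Fintype.card_fin, nsmul_eq_mul] at hsum
    have hmpos : (0:ℝ) < m := by exact_mod_cast hm
    have h1 : 2 * γ / m * ∑ k, (∑ i, x k i * v i) ^ 2 ≤ 2 * γ / m * (m * (R * ∑ i, v i ^ 2)) :=
      mul_le_mul_of_nonneg_left hsum hc
    have h2 : 2 * γ / m * (m * (R * ∑ i, v i ^ 2)) = 2 * γ * R * ∑ i, v i ^ 2 := by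
      field_simp
    have h3 : 2 * γ * R * ∑ i, v i ^ 2 ≤ 1 * ∑ i, v i ^ 2 :=
      mul_le_mul_of_nonneg_right hγR (by positivity)
    linarith
  have hPt : ((1 : Matrix (Fin d) (Fin d) ℝ) - S)ᵀ = 1 - S := by
    ext i j
    have := congr_fun (congr_fun hSherm i) j
    simp only [Matrix.conjTranspose_apply, star_trivial] at this
    simp [Matrix.transpose_apply, Matrix.sub_apply, Matrix.one_apply, this, eq_comm]
  obtain ⟨T, hs, hTh⟩ : ∃ T : Matrix (Fin d) (Fin d) ℝ, T * T = S ∧ T.IsHermitian := by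
    open scoped MatrixOrder in
    exact ⟨CFC.sqrt S, CFC.sqrt_mul_sqrt_self S hSpsd.nonneg,
      (CFC.sqrt_nonneg S).posSemidef.isHermitian⟩
  have hmid : T * S * T = S * S := by
    calc T * S * T
        = T * (T * T) * T := by rw [hs]
      _ = (T * T) * (T * T) := by noncomm_ring
      _ = S * S := by rw [hs]
  have key : (1 : Matrix (Fin d) (Fin d) ℝ) - ((1 - S)ᵀ * (1 - S) + S)
      = T * (1 - S) * T := by
    rw [hPt]
    calc (1 : Matrix (Fin d) (Fin d) ℝ) - ((1 - S) * (1 - S) + S) = S - S * S := by noncomm_ring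
      _ = T * T - T * S * T := by rw [hs, hmid]
      _ = T * (1 - S) * T := by noncomm_ring
  rw [key]
  have := hIS.mul_mul_conjTranspose_same T
  rwa [hTh.eq] at this
end

section
/- Let H_i = I − 2γ x_i x_i^⊤ for vectors x_0,…,x_{B-1} ∈ ℝ^d with ‖x_i‖² ≤ R and suppose γRB < 1/4. Then the product H = H_{B-1} ⋯ H_1 H_0 satisfies H^⊤ H ⪯ I − 4γ(1 − 2γBR/(1 − 4γBR)) Σ_{i=0}^{B-1} x_i x_i^⊤. -/
open Matrix Finset

namespace Stmt6Helpers

variable {d : ℕ}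

lemma vmv_herm (x : Fin d → ℝ) : (vecMulVec x x).IsHermitian := by
  ext i j; simp [conjTranspose_apply, vecMulVec_apply, mul_comm]

lemma vmv_psd (x : Fin d → ℝ) : (vecMulVec x x).PosSemidef := by
  refine Matrix.PosSemidef.of_dotProduct_mulVec_nonneg (vmv_herm x) fun v => ?_
  have h : star v ⬝ᵥ (vecMulVec x x *ᵥ v) = (∑ j, x j * v j) ^ 2 := by
    simp only [mulVec, dotProduct, vecMulVec_apply, star_trivial, sq]
    simp only [Finset.mul_sum, Finset.sum_mul]
    exact Finset.sum_congr rfl fun i _ => Finset.sum_congr rfl fun j _ => by ring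
  rw [h]; positivity

lemma vmv_mul_vmv (x : Fin d → ℝ) :
    vecMulVec x x * vecMulVec x x = (∑ j, x j ^ 2) • vecMulVec x x := by
  ext i j
  simp only [mul_apply, vecMulVec_apply, Matrix.smul_apply, smul_eq_mul, Finset.sum_mul]
  exact Finset.sum_congr rfl fun k _ => by ring

lemma psd_smul {M : Matrix (Fin d) (Fin d) ℝ} (hM : M.PosSemidef) {c : ℝ} (hc : 0 ≤ c) :
    (c • M).PosSemidef := by
  refine Matrix.PosSemidef.of_dotProduct_mulVec_nonneg (by rw [IsHermitian, conjTranspose_smul, star_trivial, hM.1]) fun v => ?_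
  rw [smul_mulVec, dotProduct_smul, smul_eq_mul]
  exact mul_nonneg hc (hM.dotProduct_mulVec_nonneg v)

lemma vmv_le_smul_one (x : Fin d → ℝ) (R : ℝ) (hx : ∑ j, x j ^ 2 ≤ R) :
    (R • (1 : Matrix (Fin d) (Fin d) ℝ) - vecMulVec x x).PosSemidef := by
  have h1 : (R • (1 : Matrix (Fin d) (Fin d) ℝ)).IsHermitian := by
    rw [IsHermitian, conjTranspose_smul, star_trivial, conjTranspose_one]
  refine Matrix.PosSemidef.of_dotProduct_mulVec_nonneg (h1.sub (vmv_herm x)) fun v => ?_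
  have h : star v ⬝ᵥ ((R • (1 : Matrix (Fin d) (Fin d) ℝ) - vecMulVec x x) *ᵥ v)
      = R * (∑ j, v j ^ 2) - ((∑ j, x j * v j) ^ 2) := by
    simp only [sub_mulVec, dotProduct_sub, smul_mulVec, dotProduct_smul, smul_eq_mul,
      one_mulVec, star_trivial]
    congr 1
    · simp only [dotProduct, Finset.mul_sum]; exact Finset.sum_congr rfl fun i _ => by ring
    · simp only [mulVec, dotProduct, vecMulVec_apply, sq, Finset.mul_sum, Finset.sum_mul]
      exact Finset.sum_congr rfl fun i _ => Finset.sum_congr rfl fun j _ => by ring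
  rw [h, sub_nonneg]
  calc (∑ j, x j * v j) ^ 2 ≤ (∑ j, x j ^ 2) * ∑ j, v j ^ 2 :=
        Finset.sum_mul_sq_le_sq_mul_sq univ x v
    _ ≤ R * ∑ j, v j ^ 2 := by
        apply mul_le_mul_of_nonneg_right hx (Finset.sum_nonneg fun j _ => sq_nonneg _)

lemma psd_sum {s : Finset ℕ} {f : ℕ → Matrix (Fin d) (Fin d) ℝ}
    (h : ∀ i ∈ s, (f i).PosSemidef) : (∑ i ∈ s, f i).PosSemidef :=
  Finset.sum_induction f _ (fun _ _ ha hb => ha.add hb) Matrix.PosSemidef.zero h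

open scoped MatrixOrder in
lemma psd_sq_le {M : Matrix (Fin d) (Fin d) ℝ} (hM : M.PosSemidef) {c : ℝ}
    (h : (c • (1 : Matrix (Fin d) (Fin d) ℝ) - M).PosSemidef) :
    (c • M - M * M).PosSemidef := by
  obtain ⟨S, hS1, hS2⟩ : ∃ S : Matrix (Fin d) (Fin d) ℝ, S.IsHermitian ∧ S * S = M :=
    by classical exact ⟨CFC.sqrt M, (CFC.sqrt_nonneg M).posSemidef.1, CFC.sqrt_mul_sqrt_self M hM.nonneg⟩
  have hid : S * (c • (1 : Matrix (Fin d) (Fin d) ℝ) - M) * S = c • M - M * M := by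
    rw [← hS2]
    simp only [Matrix.mul_sub, Matrix.sub_mul, Matrix.mul_smul, Matrix.smul_mul, Matrix.mul_one,
      Matrix.mul_assoc]
  rw [← hid]
  have := h.conjTranspose_mul_mul_same S
  rwa [hS1] at this

lemma psd_cross {M N : Matrix (Fin d) (Fin d) ℝ} (hM : M.IsHermitian) (hN : N.IsHermitian)
    {t : ℝ} (ht : 0 < t) :
    (t • (M * M) + t⁻¹ • (N * N) - M * N - N * M).PosSemidef := by
  have hP := Matrix.posSemidef_conjTranspose_mul_self
    (Real.sqrt t • M - (Real.sqrt t)⁻¹ • N)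
  have hst : Real.sqrt t ≠ 0 := by positivity
  have hPh : (Real.sqrt t • M - (Real.sqrt t)⁻¹ • N)ᴴ
      = Real.sqrt t • M - (Real.sqrt t)⁻¹ • N := by
    rw [conjTranspose_sub, conjTranspose_smul, conjTranspose_smul, star_trivial, star_trivial,
      hM, hN]
  rw [hPh] at hP
  have hexp : (Real.sqrt t • M - (Real.sqrt t)⁻¹ • N) * (Real.sqrt t • M - (Real.sqrt t)⁻¹ • N)
      = t • (M * M) + t⁻¹ • (N * N) - M * N - N * M := by
    simp only [Matrix.sub_mul, Matrix.mul_sub, Matrix.smul_mul, Matrix.mul_smul, smul_sub, smul_smul]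
    rw [Real.mul_self_sqrt ht.le, inv_mul_cancel₀ hst, mul_inv_cancel₀ hst,
      ← Real.sqrt_inv, Real.mul_self_sqrt (by positivity)]
    rw [one_smul, one_smul]
    abel
  rwa [hexp] at hP

set_option maxHeartbeats 1000000 in
lemma scalar_core (γ R b s c c' D1 D2 : ℝ) (hγ : 0 < γ) (hR0 : 0 ≤ R) (hb : 1 ≤ b)
    (h16 : γ * R * (b + 1) ≤ 1/6) (hs0 : 0 ≤ s) (hsR : s ≤ R)
    (hD1def : D1 = 1 - 4*γ*b*R) (hD2def : D2 = 1 - 4*γ*(b+1)*R)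
    (hc'D : c' * D1 = 4*γ*(1 - 6*γ*b*R)) (hcD : c * D2 = 4*γ*(1 - 6*γ*(b+1)*R)) :
    0 ≤ c' ∧
    2*γ*c'/(b*D2)*(b*R) ≤ c' - c ∧
    0 ≤ 4*γ - c - (4*γ^2 + 2*γ*c'*(b*D2))*s := by
  subst hD1def hD2def
  set D1 : ℝ := 1 - 4*γ*b*R with hD1def
  set D2 : ℝ := 1 - 4*γ*(b+1)*R with hD2def
  have ha : 0 ≤ γ*R := by positivity
  have hD2 : 1/3 ≤ D2 := by rw [hD2def]; nlinarith
  have hD1 : D2 ≤ D1 := by rw [hD1def, hD2def]; nlinarith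
  have hD1pos : 0 < D1 := by linarith
  have hD2pos : 0 < D2 := by linarith
  have ht : 0 < b * D2 := by positivity
  have hnum : 0 ≤ 1 - 6*γ*b*R := by nlinarith
  have G1 : 0 ≤ c' := by nlinarith
  have hz0 : 0 ≤ γ*R*(b+1) := by positivity
  refine ⟨G1, ?_, ?_⟩
  · rw [div_mul_eq_mul_div, div_le_iff₀ ht]
    have hq : ((c'-c)*(b*D2) - 2*γ*c'*(b*R))*D1 = 48*γ^3*R^2*b^2 := by
      rw [hD1def, hD2def]
      linear_combination (b*((1-4*γ*(b+1)*R) - 2*γ*R))*hc'D - b*(1-4*γ*b*R)*hcD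
    nlinarith [hq, sq_nonneg (γ*R*b)]
  · have h1 : (4*γ^2 + 2*γ*c'*(b*D2))*s ≤ (4*γ^2 + 2*γ*c'*(b*D2))*R := by
      apply mul_le_mul_of_nonneg_left hsR; positivity
    have key3 : (4*γ - c - (4*γ^2 + 2*γ*c'*(b*D2))*R) * (D1*D2)
        = 4*γ*( D1*D2 - (1-6*γ*(b+1)*R)*D1 - (γ*R)*(D1*D2)
              - 2*(γ*R)*b*D2^2*(1-6*γ*b*R) ) := by
      rw [hD1def, hD2def]
      linear_combination (-((1-4*γ*b*R) : ℝ))*hcD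
        - 2*γ*R*b*(1-4*γ*(b+1)*R)^2*hc'D
    have hident : (D1*D2 - (1-6*γ*(b+1)*R)*D1 - (γ*R)*(D1*D2)
          - 2*(γ*R)*b*D2^2*(1-6*γ*b*R))*(b+1)
        = γ*R*(1+4*(γ*R*(b+1))) + γ*R*b*(1+16*(γ*R*(b+1))-48*(γ*R*(b+1))^2)
          + 192*(γ*R)*(γ*R*(b+1))*b^2*(1/4-(γ*R*(b+1)))*(5/12-(γ*R*(b+1))) := by
      rw [hD1def, hD2def]; ring
    have hs1 : 0 ≤ γ*R*(1+4*(γ*R*(b+1))) := by nlinarith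
    have hfac : 0 ≤ 1+16*(γ*R*(b+1))-48*(γ*R*(b+1))^2 := by
      nlinarith [mul_nonneg hz0 (by linarith : (0:ℝ) ≤ 1/6 - γ*R*(b+1))]
    have hs2 : 0 ≤ γ*R*b*(1+16*(γ*R*(b+1))-48*(γ*R*(b+1))^2) :=
      mul_nonneg (mul_nonneg ha (by linarith)) hfac
    have hs3 : 0 ≤ 192*(γ*R)*(γ*R*(b+1))*b^2*(1/4-(γ*R*(b+1)))*(5/12-(γ*R*(b+1))) := by
      have h14 : 0 ≤ 1/4 - γ*R*(b+1) := by linarith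
      have h512 : 0 ≤ 5/12 - γ*R*(b+1) := by linarith
      positivity
    have hM : 0 ≤ D1*D2 - (1-6*γ*(b+1)*R)*D1 - (γ*R)*(D1*D2)
        - 2*(γ*R)*b*D2^2*(1-6*γ*b*R) := by
      have hsum := add_nonneg (add_nonneg hs1 hs2) hs3
      rw [← hident] at hsum
      exact le_of_mul_le_mul_right (by linarith : 0 * (b+1) ≤ _ * (b+1)) (by linarith)
    have h2 : 0 ≤ (4*γ - c - (4*γ^2 + 2*γ*c'*(b*D2))*R) * (D1*D2) := by
      rw [key3]; positivity
    have h3 : 0 ≤ 4*γ - c - (4*γ^2 + 2*γ*c'*(b*D2))*R :=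
      le_of_mul_le_mul_right (by linarith : 0 * (D1*D2) ≤ _ * (D1*D2))
        (by positivity)
    linarith

noncomputable def prodH (γ : ℝ) (x : ℕ → Fin d → ℝ) (B : ℕ) : Matrix (Fin d) (Fin d) ℝ :=
  (((List.range B).reverse).map
    (fun i => (1 : Matrix (Fin d) (Fin d) ℝ) - (2 * γ) • vecMulVec (x i) (x i))).prod

lemma prodH_zero (γ : ℝ) (x : ℕ → Fin d → ℝ) : prodH γ x 0 = 1 := rfl

lemma prodH_succ (γ : ℝ) (x : ℕ → Fin d → ℝ) (B : ℕ) :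
    prodH γ x (B + 1)
      = ((1 : Matrix (Fin d) (Fin d) ℝ) - (2 * γ) • vecMulVec (x B) (x B)) * prodH γ x B := by
  unfold prodH
  rw [List.range_succ, List.reverse_append, List.reverse_singleton, List.singleton_append,
    List.map_cons, List.prod_cons]

lemma prodH_succ' (γ : ℝ) (x : ℕ → Fin d → ℝ) (B : ℕ) :
    prodH γ x (B + 1)
      = prodH γ (fun i => x (i + 1)) B
        * ((1 : Matrix (Fin d) (Fin d) ℝ) - (2 * γ) • vecMulVec (x 0) (x 0)) := by
  unfold prodH
  rw [List.range_succ_eq_map, List.reverse_cons, List.map_append, List.prod_append,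
    List.map_reverse, List.map_map, List.map_reverse]
  simp [Function.comp_def]


lemma factor_symm (γ : ℝ) (y : Fin d → ℝ) :
    ((1 : Matrix (Fin d) (Fin d) ℝ) - (2 * γ) • vecMulVec y y)ᵀ
      = (1 : Matrix (Fin d) (Fin d) ℝ) - (2 * γ) • vecMulVec y y := by
  rw [← conjTranspose_eq_transpose_of_trivial, conjTranspose_sub, conjTranspose_smul,
    conjTranspose_one, star_trivial, (vmv_psd y).1]

lemma contract (γ : ℝ) (hγ : 0 < γ) :
    ∀ (B : ℕ) (x : ℕ → Fin d → ℝ), (∀ i < B, γ * ∑ j, (x i j) ^ 2 ≤ 1) →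
      ((1 : Matrix (Fin d) (Fin d) ℝ) - (prodH γ x B)ᵀ * prodH γ x B).PosSemidef := by
  intro B
  induction B with
  | zero => intro x _; simpa [prodH] using Matrix.PosSemidef.zero
  | succ n ih =>
    intro x hx
    set A := vecMulVec (x n) (x n) with hA
    set F := (1 : Matrix (Fin d) (Fin d) ℝ) - (2 * γ) • A with hF
    set P := prodH γ x n with hP
    have hs : 0 ≤ ∑ j, (x n j) ^ 2 := Finset.sum_nonneg fun j _ => sq_nonneg _
    have h1 : (1 : Matrix (Fin d) (Fin d) ℝ) - F * F
        = (4 * γ - 4 * γ ^ 2 * ∑ j, (x n j) ^ 2) • A := by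
      rw [hF, hA]
      simp only [Matrix.mul_sub, Matrix.sub_mul, Matrix.mul_one, Matrix.one_mul,
        Matrix.smul_mul, Matrix.mul_smul, smul_smul, vmv_mul_vmv]
      module
    have h1psd : ((1 : Matrix (Fin d) (Fin d) ℝ) - F * F).PosSemidef := by
      rw [h1]
      refine psd_smul (vmv_psd _) ?_
      have := hx n (by omega)
      nlinarith
    have hsplit : (1 : Matrix (Fin d) (Fin d) ℝ) - (prodH γ x (n+1))ᵀ * prodH γ x (n+1)
        = Pᵀ * ((1 : Matrix (Fin d) (Fin d) ℝ) - F * F) * P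
          + ((1 : Matrix (Fin d) (Fin d) ℝ) - Pᵀ * P) := by
      rw [prodH_succ, transpose_mul, factor_symm, ← hA, ← hF, ← hP]
      simp only [Matrix.mul_sub, Matrix.sub_mul, Matrix.mul_one, Matrix.one_mul, Matrix.mul_assoc]
      abel
    rw [hsplit]
    refine Matrix.PosSemidef.add ?_ (ih x fun i hi => hx i (by omega))
    have := h1psd.conjTranspose_mul_mul_same P
    rwa [conjTranspose_eq_transpose_of_trivial] at this

set_option maxHeartbeats 2000000 in
lemma key (γ R : ℝ) (hγ : 0 < γ) :
    ∀ (B : ℕ) (x : ℕ → Fin d → ℝ), (∀ i < B, ∑ j, (x i j) ^ 2 ≤ R) → γ * R * B ≤ 1/6 →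
    (((1 : Matrix (Fin d) (Fin d) ℝ) -
        (4 * γ * (1 - 2 * γ * B * R / (1 - 4 * γ * B * R))) •
          ∑ i ∈ Finset.range B, vecMulVec (x i) (x i))
      - (prodH γ x B)ᵀ * prodH γ x B).PosSemidef := by
  intro B
  induction B with
  | zero =>
    intro x _ _
    simpa [prodH] using Matrix.PosSemidef.zero
  | succ n ih =>
    intro x hx h16
    have hR0 : 0 ≤ R := le_trans (Finset.sum_nonneg fun j _ => sq_nonneg _) (hx 0 (by omega))
    have hs00 : 0 ≤ ∑ j, (x 0 j) ^ 2 := Finset.sum_nonneg fun j _ => sq_nonneg _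
    have hs0R : ∑ j, (x 0 j) ^ 2 ≤ R := hx 0 (by omega)
    match n, ih, hx, h16 with
    | 0, ih, hx, h16 =>
      -- B = 1 case
      push_cast at h16 ⊢
      rw [prodH_succ, prodH_zero, Matrix.mul_one, factor_symm, Finset.sum_range_one]
      set A := vecMulVec (x 0) (x 0) with hA
      set s0 := ∑ j, (x 0 j) ^ 2 with hs0
      have hAA : A * A = s0 • A := vmv_mul_vmv (x 0)
      set c := 4*γ*(1 - 2*γ*1*R/(1-4*γ*1*R)) with hcdef
      have hD : (0:ℝ) < 1 - 4*γ*1*R := by nlinarith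
      have hDne : (1 - 4*γ*1*R) ≠ 0 := ne_of_gt hD
      have h2 : 2*γ*1*R/(1-4*γ*1*R)*(1-4*γ*1*R) = 2*γ*1*R := div_mul_cancel₀ _ hDne
      have hcD : c*(1-4*γ*1*R) = 4*γ*(1-6*γ*R) := by
        calc c*(1-4*γ*1*R)
            = 4*γ*((1-4*γ*1*R) - 2*γ*1*R/(1-4*γ*1*R)*(1-4*γ*1*R)) := by rw [hcdef]; ring
          _ = 4*γ*((1-4*γ*1*R) - 2*γ*1*R) := by rw [h2]
          _ = 4*γ*(1-6*γ*R) := by ring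
      have hcoef : 0 ≤ 4*γ - c - 4*γ^2*s0 := by
        nlinarith [hcD, mul_nonneg (mul_nonneg hγ.le (sub_nonneg.2 hs0R)) hD.le,
          mul_nonneg (mul_nonneg hγ.le hR0) (mul_nonneg hγ.le hR0)]
      have hid : (1 : Matrix (Fin d) (Fin d) ℝ) - c • A
            - (1 - (2*γ) • A) * (1 - (2*γ) • A) = (4*γ - c - 4*γ^2*s0) • A := by
        simp only [Matrix.mul_sub, Matrix.sub_mul, Matrix.mul_one, Matrix.one_mul,
          Matrix.smul_mul, Matrix.mul_smul, smul_smul, hAA]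
        module
      rw [hid]
      exact psd_smul (vmv_psd _) hcoef
    | (m+1), ih, hx, h16 =>
      -- main case: B = m + 2
      have hx' : ∀ i < m + 1, ∑ j, (x (i+1) j) ^ 2 ≤ R := fun i hi => hx (i+1) (by omega)
      have h16' : γ * R * ((m+1) : ℕ) ≤ 1/6 := by
        push_cast at h16 ⊢
        nlinarith
      have hIH := ih (fun i => x (i+1)) hx' h16'
      push_cast at h16 hIH ⊢
      set b : ℝ := (m : ℝ) + 1 with hb
      have hb1 : 1 ≤ b := by rw [hb]; have : (0:ℝ) ≤ (m:ℝ) := Nat.cast_nonneg m; linarith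
      rw [prodH_succ', Finset.sum_range_succ', transpose_mul, factor_symm]
      set A := vecMulVec (x 0) (x 0) with hAdef
      set S' := ∑ i ∈ Finset.range (m+1), vecMulVec (x (i+1)) (x (i+1)) with hS'def
      set Q := prodH γ (fun i => x (i+1)) (m+1) with hQdef
      set s0 := ∑ j, (x 0 j) ^ 2 with hs0def
      set D1 : ℝ := 1 - 4*γ*b*R with hD1def
      set D2 : ℝ := 1 - 4*γ*(b+1)*R with hD2def
      set c' : ℝ := 4*γ*(1 - 2*γ*b*R/D1) with hc'def
      set c : ℝ := 4*γ*(1 - 2*γ*(b+1)*R/D2) with hcdef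
      set t : ℝ := b*D2 with htdef
      -- scalar facts
      have ha : 0 ≤ γ*R := by positivity
      have hD2pos : (0:ℝ) < D2 := by rw [hD2def]; nlinarith
      have hD1pos : (0:ℝ) < D1 := by rw [hD1def, hD2def] at *; nlinarith
      have hD1ne : D1 ≠ 0 := ne_of_gt hD1pos
      have hD2ne : D2 ≠ 0 := ne_of_gt hD2pos
      have hc'D : c' * D1 = 4*γ*(1 - 6*γ*b*R) := by
        calc c' * D1 = 4*γ*(D1 - 2*γ*b*R/D1*D1) := by rw [hc'def]; ring
          _ = 4*γ*(D1 - 2*γ*b*R) := by rw [div_mul_cancel₀ _ hD1ne]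
          _ = 4*γ*(1 - 6*γ*b*R) := by rw [hD1def]; ring
      have hcD : c * D2 = 4*γ*(1 - 6*γ*(b+1)*R) := by
        calc c * D2 = 4*γ*(D2 - 2*γ*(b+1)*R/D2*D2) := by rw [hcdef]; ring
          _ = 4*γ*(D2 - 2*γ*(b+1)*R) := by rw [div_mul_cancel₀ _ hD2ne]
          _ = 4*γ*(1 - 6*γ*(b+1)*R) := by rw [hD2def]; ring
      obtain ⟨G1, G2, G3⟩ :=
        scalar_core γ R b s0 c c' D1 D2 hγ hR0 hb1 h16 hs00 hs0R hD1def hD2def hc'D hcD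
      have ht : (0:ℝ) < t := by rw [htdef]; positivity
      -- matrix facts
      have hApsd : A.PosSemidef := vmv_psd (x 0)
      have hS'psd : S'.PosSemidef := psd_sum fun i _ => vmv_psd _
      have hAA : A * A = s0 • A := vmv_mul_vmv (x 0)
      have hS'le : ((b*R) • (1 : Matrix (Fin d) (Fin d) ℝ) - S').PosSemidef := by
        have h1 := psd_sum (s := Finset.range (m+1))
          (f := fun i => R • (1 : Matrix (Fin d) (Fin d) ℝ) - vecMulVec (x (i+1)) (x (i+1)))
          (fun i hi => vmv_le_smul_one _ R (hx (i+1) (by have := Finset.mem_range.mp hi; omega)))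
        rw [Finset.sum_sub_distrib, Finset.sum_const, Finset.card_range] at h1
        have h2 : (m+1) • (R • (1 : Matrix (Fin d) (Fin d) ℝ))
            = (b*R) • (1 : Matrix (Fin d) (Fin d) ℝ) := by
          rw [← Nat.cast_smul_eq_nsmul ℝ, smul_smul, hb]
          push_cast
          ring_nf
        rwa [h2] at h1
      -- the six PSD components
      have C1 : ((1 - (2*γ) • A) * (1 - c' • S' - Qᵀ * Q) * (1 - (2*γ) • A)).PosSemidef := by
        have h := hIH.conjTranspose_mul_mul_same (1 - (2*γ) • A)
        rwa [conjTranspose_eq_transpose_of_trivial, hAdef, factor_symm, ← hAdef] at h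
      have C2 : ((4*γ^2*c') • (A * S' * A)).PosSemidef := by
        refine psd_smul ?_ (by positivity)
        have h := hS'psd.mul_mul_conjTranspose_same A
        rwa [hApsd.1] at h
      have C3 : ((2*γ*c') • (t • (A * A) + t⁻¹ • (S' * S') - A * S' - S' * A)).PosSemidef :=
        psd_smul (psd_cross hApsd.1 hS'psd.1 ht) (by positivity)
      have C4 : ((4*γ - c - (4*γ^2 + 2*γ*c'*t) * s0) • A).PosSemidef := psd_smul hApsd G3
      have C5 : ((2*γ*c'/t) • ((b*R) • S' - S' * S')).PosSemidef :=
        psd_smul (psd_sq_le hS'psd hS'le) (div_nonneg (by positivity) ht.le)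
      have C6 : ((c' - c - 2*γ*c'/t*(b*R)) • S').PosSemidef :=
        psd_smul hS'psd (by linarith)
      -- the big identity
      have hbig : (1 : Matrix (Fin d) (Fin d) ℝ) - c • (S' + A)
            - (1 - (2*γ) • A) * Qᵀ * (Q * (1 - (2*γ) • A))
          = (1 - (2*γ) • A) * (1 - c' • S' - Qᵀ * Q) * (1 - (2*γ) • A)
            + (4*γ^2*c') • (A * S' * A)
            + (2*γ*c') • (t • (A * A) + t⁻¹ • (S' * S') - A * S' - S' * A)
            + (4*γ - c - (4*γ^2 + 2*γ*c'*t) * s0) • A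
            + (2*γ*c'/t) • ((b*R) • S' - S' * S')
            + (c' - c - 2*γ*c'/t*(b*R)) • S' := by
        simp only [Matrix.mul_sub, Matrix.sub_mul, Matrix.mul_add, Matrix.add_mul,
          Matrix.smul_mul, Matrix.mul_smul, Matrix.mul_one, Matrix.one_mul,
          smul_sub, smul_add, smul_smul, Matrix.mul_assoc, hAA]
        module
      rw [hbig]
      exact ((((C1.add C2).add C3).add C4).add C5).add C6

end Stmt6Helpers

open Stmt6Helpers

/-- Upper Loewner bound for the reverse product `H = H_{B−1} ⋯ H_0` of
`H_i = I − 2γ x_i x_iᵀ` with `‖x_i‖² ≤ R` and `γRB < 1/4`: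
`Hᵀ H ⪯ I − 4γ(1 − 2γBR/(1 − 4γBR)) Σ_i x_i x_iᵀ`. -/
theorem stmt_6 {d B : ℕ} (x : ℕ → (Fin d → ℝ)) (R γ : ℝ) (hγ : 0 < γ)
    (hR : ∀ i < B, ∑ j, (x i j) ^ 2 ≤ R) (hγRB : γ * R * B < 1 / 4) :
    letI H : Matrix (Fin d) (Fin d) ℝ :=
      (((List.range B).reverse).map
        (fun i => (1 : Matrix (Fin d) (Fin d) ℝ) - (2 * γ) • vecMulVec (x i) (x i))).prod
    (((1 : Matrix (Fin d) (Fin d) ℝ) -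
        (4 * γ * (1 - 2 * γ * B * R / (1 - 4 * γ * B * R))) •
          ∑ i ∈ Finset.range B, vecMulVec (x i) (x i))
      - Hᵀ * H).PosSemidef := by
  show (((1 : Matrix (Fin d) (Fin d) ℝ) -
        (4 * γ * (1 - 2 * γ * B * R / (1 - 4 * γ * B * R))) •
          ∑ i ∈ Finset.range B, vecMulVec (x i) (x i))
      - (prodH γ x B)ᵀ * prodH γ x B).PosSemidef
  by_cases hcase : γ * R * B ≤ 1/6
  · exact key γ R hγ B x hR hcase
  · push_neg at hcase
    have hB : 1 ≤ B := by
      by_contra h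
      have : B = 0 := by omega
      subst this
      simp at hcase
      linarith
    have hB1 : (1:ℝ) ≤ (B:ℝ) := by exact_mod_cast hB
    have hR0 : 0 ≤ R := le_trans (Finset.sum_nonneg fun j _ => sq_nonneg _) (hR 0 (by omega))
    have hD : (0:ℝ) < 1 - 4 * γ * B * R := by nlinarith
    set c : ℝ := 4 * γ * (1 - 2 * γ * B * R / (1 - 4 * γ * B * R)) with hcdef
    have hcD : c * (1 - 4 * γ * B * R) = 4*γ*(1 - 6*γ*B*R) := by
      calc c * (1 - 4 * γ * B * R)
          = 4*γ*((1 - 4 * γ * B * R) - 2*γ*B*R/(1 - 4 * γ * B * R)*(1 - 4 * γ * B * R)) := by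
            rw [hcdef]; ring
        _ = 4*γ*((1 - 4 * γ * B * R) - 2*γ*B*R) := by rw [div_mul_cancel₀ _ (ne_of_gt hD)]
        _ = 4*γ*(1 - 6*γ*B*R) := by ring
    have hcneg : c ≤ 0 := by nlinarith
    have hcontract : ((1 : Matrix (Fin d) (Fin d) ℝ)
        - (prodH γ x B)ᵀ * prodH γ x B).PosSemidef := by
      refine contract γ hγ B x fun i hi => ?_
      have h1 : γ * ∑ j, (x i j) ^ 2 ≤ γ * R :=
        mul_le_mul_of_nonneg_left (hR i hi) hγ.le
      nlinarith
    have hid : ((1 : Matrix (Fin d) (Fin d) ℝ) -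
          c • ∑ i ∈ Finset.range B, vecMulVec (x i) (x i))
        - (prodH γ x B)ᵀ * prodH γ x B
        = ((1 : Matrix (Fin d) (Fin d) ℝ) - (prodH γ x B)ᵀ * prodH γ x B)
          + (-c) • ∑ i ∈ Finset.range B, vecMulVec (x i) (x i) := by module
    rw [hid]
    exact hcontract.add (psd_smul (psd_sum fun i _ => vmv_psd _) (by linarith))
end

section
/- Let H_i = I − 2γ x_i x_i^⊤ with ‖x_i‖² ≤ R and γRB < 1/4. Then the product H = H_{B-1} ⋯ H_0 satisfies H^⊤ H ⪰ I − 4γ(1 + 2γBR/(1 − 4γBR)) Σ_{i=0}^{B-1} x_i x_i^⊤. -/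
open Matrix Finset
lemma my_sq_sum (n : ℕ) (s : ℕ → ℝ) :
    (∑ i ∈ range n, s i)^2 = ∑ i ∈ range n, (s i)^2
      + 2 * ∑ i ∈ range n, s i * ∑ j ∈ range i, s j := by
  induction n with
  | zero => simp
  | succ n ih =>
    simp only [Finset.sum_range_succ]
    nlinarith [ih]

lemma aux_scalar (B : ℕ) (s c : ℕ → ℝ) (q : ℝ) (hq : 0 ≤ q)
    (hs : ∀ i, 0 ≤ s i) (hc : ∀ i, 0 ≤ c i)
    (hrec : ∀ i < B, s i ≤ c i + q * ∑ j ∈ range i, s j)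
    (hδ : q * B < 1 / 2) :
    ∑ i ∈ range B, (s i)^2 ≤ (1 + q * B / (1 - 2 * (q * B))) * ∑ i ∈ range B, (c i)^2 := by
  set δ : ℝ := q * B with hδdef
  have hδ0 : 0 ≤ δ := mul_nonneg hq (Nat.cast_nonneg B)
  set S : ℝ := ∑ i ∈ range B, (s i)^2 with hSdef
  set T : ℝ := ∑ i ∈ range B, (c i)^2 with hTdef
  set u : ℝ := ∑ i ∈ range B, s i with hudef
  set SC : ℝ := ∑ i ∈ range B, s i * c i with hSCdef
  set P : ℝ := ∑ i ∈ range B, s i * ∑ j ∈ range i, s j with hPdef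
  have hS0 : 0 ≤ S := Finset.sum_nonneg fun i _ => sq_nonneg _
  have hT0 : 0 ≤ T := Finset.sum_nonneg fun i _ => sq_nonneg _
  set a : ℝ := 1 - δ/2 with hadef
  have ha0 : 0 < a := by rw [hadef]; linarith
  have h1 : S ≤ SC + q * P := by
    rw [hSdef, hSCdef, hPdef, Finset.mul_sum, ← Finset.sum_add_distrib]
    refine Finset.sum_le_sum fun i hi => ?_
    have hi' := Finset.mem_range.mp hi
    have := mul_le_mul_of_nonneg_left (hrec i hi') (hs i)
    nlinarith [this]
  have h2 : u^2 = S + 2 * P := my_sq_sum B s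
  have h3 : u^2 ≤ (B : ℝ) * S := by
    have := Finset.sum_mul_sq_le_sq_mul_sq (range B) (fun _ => (1:ℝ)) s
    simpa [hudef, hSdef] using this
  have h4 : 2*a*SC ≤ a^2 * S + T := by
    rw [hSCdef, hSdef, hTdef, Finset.mul_sum, Finset.mul_sum, ← Finset.sum_add_distrib]
    refine Finset.sum_le_sum fun i hi => ?_
    nlinarith [sq_nonneg (a * s i - c i)]
  have h5 : a^2 * S ≤ T := by
    have hqP : 2*(q*P) ≤ δ * S := by
      have h2P : 2*P ≤ (B:ℝ) * S - S := by linarith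
      have := mul_le_mul_of_nonneg_left h2P hq
      have hqS : 0 ≤ q * S := mul_nonneg hq hS0
      nlinarith [this]
    have hstep : 2*S ≤ 2*SC + δ*S := by linarith
    have h6 := mul_le_mul_of_nonneg_left hstep (le_of_lt ha0)
    rw [hadef] at h6 h4 ⊢
    nlinarith [h6, h4]
  have h2δ : 0 < 1 - 2*δ := by linarith
  set e : ℝ := δ / (1 - 2*δ) with hedef
  have he : e * (1 - 2*δ) = δ := div_mul_cancel₀ δ (ne_of_gt h2δ)
  have he0 : 0 ≤ e := div_nonneg hδ0 (le_of_lt h2δ)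
  have key : (1+e) * (1-2*δ) = 1 - δ := by linear_combination he
  have hk' : (1-2*δ) ≤ (1-δ) * a^2 := by
    rw [hadef]; nlinarith [mul_nonneg (mul_nonneg hδ0 hδ0) (by linarith : (0:ℝ) ≤ 5 - δ)]
  have hk : 1 ≤ (1+e) * a^2 := by
    have h := hk'
    rw [← key] at h
    have : 1 * (1 - 2*δ) ≤ ((1+e) * a^2) * (1-2*δ) := by nlinarith [h]
    exact le_of_mul_le_mul_right (by linarith) h2δ
  calc S = 1 * S := (one_mul S).symm
    _ ≤ ((1+e) * a^2) * S := mul_le_mul_of_nonneg_right hk hS0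
    _ = (1+e) * (a^2 * S) := by ring
    _ ≤ (1+e) * T := mul_le_mul_of_nonneg_left h5 (by linarith)

lemma my_vecMulVec_mulVec {d : ℕ} (a b v : Fin d → ℝ) :
    vecMulVec a b *ᵥ v = (b ⬝ᵥ v) • a := by
  ext i
  simp [vecMulVec, mulVec, dotProduct, Finset.mul_sum, mul_comm, mul_assoc, Pi.smul_apply,
    smul_eq_mul]
  exact Finset.sum_congr rfl fun j _ => by ring

lemma my_sum_mulVec {d : ℕ} (B : ℕ) (A : ℕ → Matrix (Fin d) (Fin d) ℝ) (v : Fin d → ℝ) :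
    (∑ i ∈ range B, A i) *ᵥ v = ∑ i ∈ range B, A i *ᵥ v := by
  ext j
  simp only [mulVec, dotProduct, Finset.sum_apply, Matrix.sum_apply, Finset.sum_mul]
  exact Finset.sum_comm

lemma my_dot_sum {d : ℕ} (x : Fin d → ℝ) (t : Finset ℕ) (g : ℕ → Fin d → ℝ) :
    x ⬝ᵥ (∑ j ∈ t, g j) = ∑ j ∈ t, x ⬝ᵥ g j := by
  simp [dotProduct, Finset.sum_apply, Finset.mul_sum]
  exact Finset.sum_comm

lemma my_abs_dot_le {d : ℕ} (a b : Fin d → ℝ) (R : ℝ) (hR0 : 0 ≤ R)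
    (ha : ∑ j, (a j)^2 ≤ R) (hb : ∑ j, (b j)^2 ≤ R) : |a ⬝ᵥ b| ≤ R := by
  have h := Finset.sum_mul_sq_le_sq_mul_sq Finset.univ a b
  have h2 : (a ⬝ᵥ b)^2 ≤ R^2 := by
    refine le_trans h ?_
    have h1 : 0 ≤ ∑ j, (a j)^2 := Finset.sum_nonneg fun j _ => sq_nonneg _
    have h1' : 0 ≤ ∑ j, (b j)^2 := Finset.sum_nonneg fun j _ => sq_nonneg _
    calc (∑ j, (a j)^2) * ∑ j, (b j)^2 ≤ R * R := mul_le_mul ha hb h1' hR0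
      _ = R^2 := (sq R).symm
  nlinarith [abs_nonneg (a ⬝ᵥ b), sq_abs (a ⬝ᵥ b)]

/-- Lower Loewner bound for the reverse product `H = H_{B−1} ⋯ H_0` of
`H_i = I − 2γ x_i x_iᵀ` with `‖x_i‖² ≤ R` and `γRB < 1/4`:
`Hᵀ H ⪰ I − 4γ(1 + 2γBR/(1 − 4γBR)) Σ_i x_i x_iᵀ`. -/
theorem stmt_7 {d B : ℕ} (x : ℕ → (Fin d → ℝ)) (R γ : ℝ) (hγ : 0 < γ)
    (hR : ∀ i < B, ∑ j, (x i j) ^ 2 ≤ R) (hγRB : γ * R * B < 1 / 4) :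
    letI H : Matrix (Fin d) (Fin d) ℝ :=
      (((List.range B).reverse).map
        (fun i => (1 : Matrix (Fin d) (Fin d) ℝ) - (2 * γ) • vecMulVec (x i) (x i))).prod
    (Hᵀ * H -
      ((1 : Matrix (Fin d) (Fin d) ℝ) -
        (4 * γ * (1 + 2 * γ * B * R / (1 - 4 * γ * B * R))) •
          ∑ i ∈ Finset.range B, vecMulVec (x i) (x i))).PosSemidef := by
  rcases Nat.eq_zero_or_pos B with rfl | hB
  · simpa using Matrix.PosSemidef.zero
  set f : ℕ → Matrix (Fin d) (Fin d) ℝ :=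
    fun i => (1 : Matrix (Fin d) (Fin d) ℝ) - (2 * γ) • vecMulVec (x i) (x i) with hf
  set H : Matrix (Fin d) (Fin d) ℝ := (((List.range B).reverse).map f).prod with hH
  have hRnn : 0 ≤ R := le_trans (Finset.sum_nonneg fun j _ => sq_nonneg _) (hR 0 hB)
  have hvecT : ∀ i : ℕ, (vecMulVec (x i) (x i))ᴴ = vecMulVec (x i) (x i) := by
    intro i; ext a b; simp [vecMulVec, conjTranspose_apply, mul_comm]
  have hM : ((1 : Matrix (Fin d) (Fin d) ℝ) -
      (4 * γ * (1 + 2 * γ * B * R / (1 - 4 * γ * B * R))) •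
        ∑ i ∈ Finset.range B, vecMulVec (x i) (x i)).IsHermitian := by
    show _ᴴ = _
    simp only [conjTranspose_sub, conjTranspose_smul, conjTranspose_one,
      Matrix.conjTranspose_sum, star_trivial]
    congr 1
    congr 1
    exact Finset.sum_congr rfl fun i _ => hvecT i
  refine Matrix.posSemidef_iff_dotProduct_mulVec.mpr ⟨(show (Hᵀ * H).IsHermitian by have h := Matrix.isHermitian_conjTranspose_mul_self H; rwa [conjTranspose_eq_transpose_of_trivial] at h).sub hM, fun v => ?_⟩
  simp only [star_trivial, RCLike.re_to_real]
  set w : ℕ → Fin d → ℝ := fun k => (((List.range k).reverse).map f).prod *ᵥ v with hw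
  set sv : ℕ → ℝ := fun k => x k ⬝ᵥ w k with hsv
  set cv : ℕ → ℝ := fun k => x k ⬝ᵥ v with hcv
  have hw0 : w 0 = v := by simp [hw]
  have hws : ∀ k, w (k+1) = w k - (2*γ*(sv k)) • x k := by
    intro k
    have hlist : ((List.range (k+1)).reverse).map f = f k :: ((List.range k).reverse).map f := by
      rw [List.range_succ, List.reverse_append]; simp
    show (((List.range (k+1)).reverse).map f).prod *ᵥ v = _
    rw [hlist, List.prod_cons, ← Matrix.mulVec_mulVec]
    show f k *ᵥ w k = _
    rw [hf]
    simp only [Matrix.sub_mulVec, Matrix.one_mulVec, Matrix.smul_mulVec,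
      my_vecMulVec_mulVec, smul_smul]
    rfl
  have hxx : ∀ k : ℕ, 0 ≤ x k ⬝ᵥ x k := fun k => Finset.sum_nonneg fun j _ => mul_self_nonneg _
  have hstep : ∀ k, w k ⬝ᵥ w k - 4*γ*(sv k)^2 ≤ w (k+1) ⬝ᵥ w (k+1) := by
    intro k
    rw [hws k]
    have hexp : (w k - (2*γ*(sv k)) • x k) ⬝ᵥ (w k - (2*γ*(sv k)) • x k)
        = w k ⬝ᵥ w k - 4*γ*(sv k)^2 + (2*γ*(sv k))^2 * (x k ⬝ᵥ x k) := by
      have h1 : x k ⬝ᵥ w k = sv k := rfl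
      have h2 : w k ⬝ᵥ x k = sv k := (dotProduct_comm _ _).trans h1
      simp only [sub_dotProduct, dotProduct_sub, smul_dotProduct, dotProduct_smul,
        smul_eq_mul, h1, h2]
      ring
    rw [hexp]
    nlinarith [hxx k, sq_nonneg (2*γ*(sv k))]
  have hA : ∀ k, v ⬝ᵥ v - 4*γ*∑ i ∈ range k, (sv i)^2 ≤ w k ⬝ᵥ w k := by
    intro k; induction k with
    | zero => simp [hw0]
    | succ n ih => rw [Finset.sum_range_succ]; have := hstep n; nlinarith [this, ih]
  have hwsum : ∀ k, w k = v - ∑ j ∈ range k, (2*γ*(sv j)) • x j := by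
    intro k; induction k with
    | zero => simp [hw0]
    | succ n ih => rw [hws n, ih, Finset.sum_range_succ]; abel
  have habs : ∀ i < B, |sv i| ≤ |cv i| + (2*γ*R) * ∑ j ∈ range i, |sv j| := by
    intro i hi
    have hx : sv i = cv i - 2*γ * ∑ j ∈ range i, sv j * (x i ⬝ᵥ x j) := by
      show x i ⬝ᵥ w i = _
      rw [hwsum i, dotProduct_sub, my_dot_sum, Finset.mul_sum]
      congr 1
      exact Finset.sum_congr rfl fun j _ => by rw [dotProduct_smul, smul_eq_mul]; ring
    rw [hx]
    have h1 : |cv i - 2*γ * ∑ j ∈ range i, sv j * (x i ⬝ᵥ x j)|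
        ≤ |cv i| + |2*γ * ∑ j ∈ range i, sv j * (x i ⬝ᵥ x j)| := abs_sub _ _
    refine h1.trans ?_
    have h2 : |2*γ * ∑ j ∈ range i, sv j * (x i ⬝ᵥ x j)|
        = 2*γ * |∑ j ∈ range i, sv j * (x i ⬝ᵥ x j)| := by
      rw [abs_mul, abs_of_pos (by linarith : (0:ℝ) < 2*γ)]
    rw [h2]
    have h3 : |∑ j ∈ range i, sv j * (x i ⬝ᵥ x j)| ≤ R * ∑ j ∈ range i, |sv j| := by
      refine (Finset.abs_sum_le_sum_abs _ _).trans ?_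
      rw [Finset.mul_sum]
      refine Finset.sum_le_sum fun j hj => ?_
      have hj' : j < B := lt_trans (Finset.mem_range.mp hj) hi
      rw [abs_mul]
      calc |sv j| * |x i ⬝ᵥ x j| ≤ |sv j| * R :=
            mul_le_mul_of_nonneg_left (my_abs_dot_le _ _ R hRnn (hR i hi) (hR j hj')) (abs_nonneg _)
        _ = R * |sv j| := mul_comm _ _
    nlinarith [h3, hγ]
  have hδ2 : (2*γ*R) * (B:ℝ) < 1/2 := by
    have he : (2*γ*R)*(B:ℝ) = 2*(γ*R*B) := by ring
    rw [he]; linarith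
  have hmain := aux_scalar B (fun i => |sv i|) (fun i => |cv i|) (2*γ*R)
    (by positivity) (fun i => abs_nonneg _) (fun i => abs_nonneg _) habs hδ2
  simp only [sq_abs] at hmain
  rw [Matrix.sub_mulVec, dotProduct_sub]
  have hq1 : v ⬝ᵥ ((Hᵀ*H) *ᵥ v) = w B ⬝ᵥ w B := by
    rw [← Matrix.mulVec_mulVec, Matrix.dotProduct_mulVec, Matrix.vecMul_transpose]
  have hq2 : v ⬝ᵥ (((1 : Matrix (Fin d) (Fin d) ℝ) -
        (4*γ*(1 + 2*γ*(B:ℝ)*R/(1 - 4*γ*(B:ℝ)*R))) • ∑ i ∈ Finset.range B, vecMulVec (x i) (x i)) *ᵥ v)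
      = v ⬝ᵥ v - (4*γ*(1 + 2*γ*(B:ℝ)*R/(1 - 4*γ*(B:ℝ)*R))) * ∑ i ∈ range B, (cv i)^2 := by
    rw [Matrix.sub_mulVec, Matrix.one_mulVec, Matrix.smul_mulVec, my_sum_mulVec,
      dotProduct_sub, dotProduct_smul, my_dot_sum, smul_eq_mul]
    congr 2
    refine Finset.sum_congr rfl fun i _ => ?_
    rw [my_vecMulVec_mulVec, dotProduct_smul, smul_eq_mul, dotProduct_comm v (x i)]
    show cv i * cv i = cv i ^ 2
    ring
  rw [hq1, hq2]
  have hκeq : 4*γ*(1 + 2*γ*(B:ℝ)*R/(1-4*γ*(B:ℝ)*R))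
      = 4*γ*(1 + (2*γ*R)*(B:ℝ)/(1-2*((2*γ*R)*(B:ℝ)))) := by ring_nf
  have h4γ : 4*γ*∑ i ∈ range B, (sv i)^2
      ≤ (4*γ*(1 + 2*γ*(B:ℝ)*R/(1-4*γ*(B:ℝ)*R))) * ∑ i ∈ range B, (cv i)^2 := by
    rw [hκeq, mul_assoc (4*γ)]
    exact mul_le_mul_of_nonneg_left hmain (by linarith)
  have := hA B
  linarith
end

section
/- Perturbation recursion bound: suppose nonnegative reals e_0, e_1, …, e_n satisfy e_{i+1} ≤ e_i + c for some constant c ≥ 0 and e_0 = 0. Then e_i ≤ c·i for all i. Applied to the coupled SGD iterates: under the event that all states are bounded by √R and 2γR < 1, ‖A_i^{avg} − Ã_i^{avg}‖ ≤ (16γ²R²T² + 8γRT)‖A^u‖ for all 0 ≤ i ≤ B−1 within any buffer, where u is the buffer gap size. -/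
set_option synthInstance.maxHeartbeats 1000000
set_option maxHeartbeats 1000000


open Matrix Finset

/-- Spectral (operator) norm of a real square matrix. -/
noncomputable def specNorm {d : ℕ} (A : Matrix (Fin d) (Fin d) ℝ) : ℝ :=
  ‖(Matrix.toEuclideanCLM (𝕜 := ℝ) A : EuclideanSpace ℝ (Fin d) →L[ℝ] EuclideanSpace ℝ (Fin d))‖

/-- Euclidean norm of a vector in `ℝ^d`. -/
noncomputable def euclidNorm {d : ℕ} (v : Fin d → ℝ) : ℝ := Real.sqrt (∑ i, (v i) ^ 2)

namespace SGDAux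

variable {d : ℕ}

lemma enorm_nonneg (v : Fin d → ℝ) : 0 ≤ euclidNorm v := Real.sqrt_nonneg _

lemma dot_self_eq (v : Fin d → ℝ) : v ⬝ᵥ v = ∑ i, v i ^ 2 := by
  simp [dotProduct, sq]

lemma dot_self_nonneg (v : Fin d → ℝ) : 0 ≤ v ⬝ᵥ v := by
  rw [dot_self_eq]; exact Finset.sum_nonneg fun i _ => sq_nonneg _

lemma enorm_eq_sqrt_dot (v : Fin d → ℝ) : euclidNorm v = Real.sqrt (v ⬝ᵥ v) := by
  rw [euclidNorm, dot_self_eq]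

lemma sq_enorm (v : Fin d → ℝ) : euclidNorm v ^ 2 = v ⬝ᵥ v := by
  rw [enorm_eq_sqrt_dot, Real.sq_sqrt (dot_self_nonneg v)]

lemma euclid_norm_eq (v : Fin d → ℝ) :
    ‖(WithLp.equiv 2 (Fin d → ℝ)).symm v‖ = euclidNorm v := by
  rw [EuclideanSpace.norm_eq, euclidNorm]
  congr 1
  refine Finset.sum_congr rfl fun i _ => ?_
  simp [Real.norm_eq_abs, sq_abs]

lemma clm_apply (A : Matrix (Fin d) (Fin d) ℝ) (v : Fin d → ℝ) :
    Matrix.toEuclideanCLM (𝕜 := ℝ) A ((WithLp.equiv 2 (Fin d → ℝ)).symm v) =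
      (WithLp.equiv 2 (Fin d → ℝ)).symm (A *ᵥ v) := by
  rfl

lemma enorm_mulVec_le (A : Matrix (Fin d) (Fin d) ℝ) (v : Fin d → ℝ) :
    euclidNorm (A *ᵥ v) ≤ specNorm A * euclidNorm v := by
  have := (Matrix.toEuclideanCLM (𝕜 := ℝ) A).le_opNorm ((WithLp.equiv 2 (Fin d → ℝ)).symm v)
  rwa [clm_apply, euclid_norm_eq, euclid_norm_eq] at this

lemma specNorm_nonneg (A : Matrix (Fin d) (Fin d) ℝ) : 0 ≤ specNorm A := norm_nonneg _

lemma specNorm_le_of {A : Matrix (Fin d) (Fin d) ℝ} {C : ℝ} (hC : 0 ≤ C)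
    (h : ∀ v, euclidNorm (A *ᵥ v) ≤ C * euclidNorm v) : specNorm A ≤ C := by
  refine ContinuousLinearMap.opNorm_le_bound _ hC fun w => ?_
  have hw : (WithLp.equiv 2 (Fin d → ℝ)).symm (WithLp.equiv 2 (Fin d → ℝ) w) = w := by simp
  have key : ∀ v : Fin d → ℝ,
      ‖Matrix.toEuclideanCLM (𝕜 := ℝ) A ((WithLp.equiv 2 (Fin d → ℝ)).symm v)‖ ≤
        C * ‖(WithLp.equiv 2 (Fin d → ℝ)).symm v‖ := fun v => by
    rw [clm_apply, euclid_norm_eq, euclid_norm_eq]; exact h v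
  have h2 := key (WithLp.equiv 2 (Fin d → ℝ) w)
  rwa [hw] at h2

lemma specNorm_zero : specNorm (0 : Matrix (Fin d) (Fin d) ℝ) = 0 := by
  rw [specNorm, map_zero, norm_zero]

lemma specNorm_add_le (A B : Matrix (Fin d) (Fin d) ℝ) :
    specNorm (A + B) ≤ specNorm A + specNorm B := by
  rw [specNorm, map_add]; exact norm_add_le _ _

lemma specNorm_sub_le (A B : Matrix (Fin d) (Fin d) ℝ) :
    specNorm (A - B) ≤ specNorm A + specNorm B := by
  rw [specNorm, map_sub]; exact norm_sub_le _ _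

lemma specNorm_smul_le (c : ℝ) (A : Matrix (Fin d) (Fin d) ℝ) :
    specNorm (c • A) ≤ |c| * specNorm A := by
  rw [specNorm, _root_.map_smul, ← Real.norm_eq_abs]
  exact ContinuousLinearMap.opNorm_smul_le c _

lemma specNorm_mul_le (A B : Matrix (Fin d) (Fin d) ℝ) :
    specNorm (A * B) ≤ specNorm A * specNorm B := by
  rw [specNorm, _root_.map_mul]; exact norm_mul_le _ _

lemma specNorm_sum_le {ι : Type*} (s : Finset ι) (f : ι → Matrix (Fin d) (Fin d) ℝ) :
    specNorm (∑ k ∈ s, f k) ≤ ∑ k ∈ s, specNorm (f k) := by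
  rw [specNorm, map_sum]; exact norm_sum_le _ _

lemma enorm_smul (c : ℝ) (v : Fin d → ℝ) : euclidNorm (c • v) = |c| * euclidNorm v := by
  rw [euclidNorm, euclidNorm]
  simp only [Pi.smul_apply, smul_eq_mul, mul_pow, ← Finset.mul_sum]
  rw [Real.sqrt_mul (sq_nonneg c), Real.sqrt_sq_eq_abs]

lemma abs_dot_le (v w : Fin d → ℝ) : |v ⬝ᵥ w| ≤ euclidNorm v * euclidNorm w := by
  rw [← Real.sqrt_sq_eq_abs, euclidNorm, euclidNorm,
    ← Real.sqrt_mul (Finset.sum_nonneg fun i _ => sq_nonneg _)]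
  exact Real.sqrt_le_sqrt (by simpa [dotProduct] using
    Finset.sum_mul_sq_le_sq_mul_sq Finset.univ v w)

lemma vecMulVec_mulVec (v w z : Fin d → ℝ) :
    vecMulVec v w *ᵥ z = (w ⬝ᵥ z) • v := by
  ext i
  simp [Matrix.mulVec, vecMulVec_apply, dotProduct, Finset.mul_sum, mul_comm, mul_assoc,
    mul_left_comm]

lemma specNorm_vecMulVec_le (v w : Fin d → ℝ) :
    specNorm (vecMulVec v w) ≤ euclidNorm v * euclidNorm w := by
  refine specNorm_le_of (mul_nonneg (enorm_nonneg v) (enorm_nonneg w)) fun z => ?_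
  rw [vecMulVec_mulVec, enorm_smul]
  calc |w ⬝ᵥ z| * euclidNorm v ≤ (euclidNorm w * euclidNorm z) * euclidNorm v :=
        mul_le_mul_of_nonneg_right (abs_dot_le w z) (enorm_nonneg v)
    _ = euclidNorm v * euclidNorm w * euclidNorm z := by ring

lemma mul_vecMulVec (A : Matrix (Fin d) (Fin d) ℝ) (v w : Fin d → ℝ) :
    A * vecMulVec v w = vecMulVec (A *ᵥ v) w := by
  ext i j
  simp [Matrix.mul_apply, vecMulVec_apply, Matrix.mulVec, dotProduct, Finset.sum_mul,
    mul_assoc]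

lemma vecMulVec_sub_left (u v w : Fin d → ℝ) :
    vecMulVec (u - v) w = vecMulVec u w - vecMulVec v w := by
  ext i j; simp [vecMulVec_apply, sub_mul]

lemma swap_dot {M : Matrix (Fin d) (Fin d) ℝ} (hsym : Mᵀ = M) (a b : Fin d → ℝ) :
    (M *ᵥ a) ⬝ᵥ b = a ⬝ᵥ (M *ᵥ b) := by
  rw [Matrix.dotProduct_mulVec, ← Matrix.mulVec_transpose, hsym, dotProduct_comm]

lemma specNorm_one_sub_le {M : Matrix (Fin d) (Fin d) ℝ} (hM : M.PosSemidef)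
    (hle : ∀ v, v ⬝ᵥ (M *ᵥ v) ≤ v ⬝ᵥ v) : specNorm (1 - M) ≤ 1 := by
  have hsym : Mᵀ = M := by
    ext i j
    have := congrFun (congrFun hM.1 i) j
    simpa [Matrix.conjTranspose_apply] using this
  have psd1M : (1 - M).PosSemidef := by
    refine Matrix.PosSemidef.of_dotProduct_mulVec_nonneg ?_ ?_
    · rw [Matrix.IsHermitian, Matrix.conjTranspose_sub, Matrix.conjTranspose_one, hM.1]
    · intro v
      have := hle v
      simp only [Matrix.sub_mulVec, Matrix.one_mulVec, dotProduct_sub, star_trivial]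
      linarith
  have hMM : ∀ v, v ⬝ᵥ ((M * M) *ᵥ v) ≤ v ⬝ᵥ (M *ᵥ v) := fun v => by
    have h1 := hM.dotProduct_mulVec_nonneg (M *ᵥ v - v)
    have h2 := hle (M *ᵥ v)
    rw [star_trivial] at h1
    simp only [Matrix.mulVec_sub, dotProduct_sub, sub_dotProduct] at h1
    have e1 : v ⬝ᵥ ((M * M) *ᵥ v) = (M *ᵥ v) ⬝ᵥ (M *ᵥ v) := by
      rw [← Matrix.mulVec_mulVec, swap_dot hsym]
    have e2 : v ⬝ᵥ (M *ᵥ (M *ᵥ v)) = (M *ᵥ v) ⬝ᵥ (M *ᵥ v) := by rw [swap_dot hsym]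
    rw [e1]; linarith [e2]
  refine specNorm_le_of zero_le_one fun v => ?_
  rw [one_mul, enorm_eq_sqrt_dot, enorm_eq_sqrt_dot]
  apply Real.sqrt_le_sqrt
  have expand : ((1 - M) *ᵥ v) ⬝ᵥ ((1 - M) *ᵥ v)
      = v ⬝ᵥ v - 2 * (v ⬝ᵥ (M *ᵥ v)) + v ⬝ᵥ ((M * M) *ᵥ v) := by
    rw [Matrix.sub_mulVec, Matrix.one_mulVec]
    rw [sub_dotProduct, dotProduct_sub, dotProduct_sub]
    have h1 : (M *ᵥ v) ⬝ᵥ v = v ⬝ᵥ (M *ᵥ v) := dotProduct_comm _ _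
    have h2 : (M *ᵥ v) ⬝ᵥ (M *ᵥ v) = v ⬝ᵥ ((M * M) *ᵥ v) := by
      rw [swap_dot hsym, Matrix.mulVec_mulVec]
    rw [h1, h2]; ring
  have hpos : 0 ≤ v ⬝ᵥ (M *ᵥ v) := by
    have := hM.dotProduct_mulVec_nonneg v; simpa [star_trivial] using this
  have := hMM v
  linarith [expand.le, expand.ge]

lemma dot_le_R {R : ℝ} (hR : 0 ≤ R) {v : Fin d → ℝ} (hv : euclidNorm v ≤ Real.sqrt R) :
    v ⬝ᵥ v ≤ R := by
  have h := sq_enorm v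
  nlinarith [enorm_nonneg v, Real.sq_sqrt hR, Real.sqrt_nonneg R]

lemma contraction {γ R : ℝ} (hγ : 0 < γ) (hR : 0 ≤ R) (h1 : 2 * γ * R < 1)
    {m : ℕ} (hm : 0 < m) (y : Fin m → Fin d → ℝ) (hy : ∀ k, euclidNorm (y k) ≤ Real.sqrt R) :
    specNorm (1 - (2 * γ / (m : ℝ)) • ∑ k, vecMulVec (y k) (y k)) ≤ 1 := by
  have hmR : (0 : ℝ) < m := Nat.cast_pos.mpr hm
  have hc : 0 ≤ 2 * γ / (m : ℝ) := by positivity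
  set c : ℝ := 2 * γ / (m : ℝ) with hcdef
  set M : Matrix (Fin d) (Fin d) ℝ := c • ∑ k, vecMulVec (y k) (y k) with hMdef
  have hquad : ∀ v, v ⬝ᵥ (M *ᵥ v) = c * ∑ k, ((y k) ⬝ᵥ v) ^ 2 := by
    intro v
    rw [hMdef, Matrix.smul_mulVec, dotProduct_smul, smul_eq_mul]
    congr 1
    simp only [dotProduct, Matrix.mulVec, Matrix.sum_apply, vecMulVec_apply,
      Finset.sum_mul, Finset.mul_sum, sq]
    rw [Finset.sum_congr rfl fun (a : Fin d) (_ : a ∈ Finset.univ) =>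
      Finset.sum_comm (f := fun (b : Fin d) (i : Fin m) => v a * (y i a * y i b * v b))]
    rw [Finset.sum_comm]
    refine Finset.sum_congr rfl fun k _ => Finset.sum_congr rfl fun i _ =>
      Finset.sum_congr rfl fun j _ => by ring
  have hpsd : M.PosSemidef := by
    refine Matrix.PosSemidef.of_dotProduct_mulVec_nonneg ?_ ?_
    · rw [Matrix.IsHermitian, hMdef]
      ext i j
      simp only [Matrix.conjTranspose_apply, Matrix.smul_apply, Matrix.sum_apply,
        vecMulVec_apply, star_trivial, smul_eq_mul]
      congr 1
      exact Finset.sum_congr rfl fun k _ => mul_comm _ _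
    · intro v
      rw [star_trivial, hquad]
      exact mul_nonneg hc (Finset.sum_nonneg fun k _ => sq_nonneg _)
  refine specNorm_one_sub_le hpsd fun v => ?_
  rw [hquad]
  have hterm : ∀ k, ((y k) ⬝ᵥ v) ^ 2 ≤ R * (v ⬝ᵥ v) := by
    intro k
    have hcs := abs_dot_le (y k) v
    have h2 : ((y k) ⬝ᵥ v) ^ 2 ≤ (euclidNorm (y k)) ^ 2 * (euclidNorm v) ^ 2 := by
      rw [← sq_abs, ← mul_pow]
      exact pow_le_pow_left₀ (abs_nonneg _) hcs 2
    rw [sq_enorm, sq_enorm] at h2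
    have h3 : (y k) ⬝ᵥ (y k) ≤ R := dot_le_R hR (hy k)
    nlinarith [dot_self_nonneg v, dot_self_nonneg (y k)]
  calc c * ∑ k, ((y k) ⬝ᵥ v) ^ 2 ≤ c * ∑ k : Fin m, R * (v ⬝ᵥ v) :=
        mul_le_mul_of_nonneg_left (Finset.sum_le_sum fun k _ => hterm k) hc
    _ = 2 * γ * R * (v ⬝ᵥ v) := by
        rw [Finset.sum_const, Finset.card_univ, Fintype.card_fin, nsmul_eq_mul, hcdef]
        field_simp
    _ ≤ 1 * (v ⬝ᵥ v) := mul_le_mul_of_nonneg_right h1.le (dot_self_nonneg v)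
    _ = v ⬝ᵥ v := one_mul _

lemma step_eq {m : ℕ} (W : Matrix (Fin d) (Fin d) ℝ) (c : ℝ) (y z : Fin m → Fin d → ℝ) :
    W - c • ∑ k, vecMulVec (W *ᵥ y k - z k) (y k)
      = W * (1 - c • ∑ k, vecMulVec (y k) (y k)) + c • ∑ k, vecMulVec (z k) (y k) := by
  have h1 : ∀ k : Fin m, vecMulVec (W *ᵥ y k - z k) (y k)
      = W * vecMulVec (y k) (y k) - vecMulVec (z k) (y k) := fun k => by
    rw [vecMulVec_sub_left, mul_vecMulVec]
  simp_rw [h1]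
  rw [Finset.sum_sub_distrib, smul_sub, mul_sub, mul_one, ← Finset.mul_sum, mul_smul_comm]
  abel

lemma specNorm_sum_le_of {m : ℕ} {f : Fin m → Matrix (Fin d) (Fin d) ℝ} {C : ℝ}
    (h : ∀ k, specNorm (f k) ≤ C) : specNorm (∑ k, f k) ≤ m * C := by
  refine le_trans (specNorm_sum_le _ _) ?_
  calc ∑ k, specNorm (f k) ≤ ∑ _k : Fin m, C := Finset.sum_le_sum fun k _ => h k
    _ = m * C := by rw [Finset.sum_const, Finset.card_univ, Fintype.card_fin, nsmul_eq_mul]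

lemma vecMulVec_diff (a b a' b' : Fin d → ℝ) :
    vecMulVec a b - vecMulVec a' b' = vecMulVec (a - a') b + vecMulVec a' (b - b') := by
  ext i j
  simp only [Matrix.sub_apply, Matrix.add_apply, vecMulVec_apply, Pi.sub_apply]
  ring

lemma enorm_sub_comm (u v : Fin d → ℝ) : euclidNorm (u - v) = euclidNorm (v - u) := by
  unfold euclidNorm
  congr 1
  exact Finset.sum_congr rfl fun i _ => by simp [Pi.sub_apply]; ring

lemma specNorm_vecMulVec_diff_le {R σ : ℝ} (hR : 0 ≤ R) (hσ : 0 ≤ σ)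
    {a b a' b' : Fin d → ℝ}
    (hb : euclidNorm b ≤ Real.sqrt R) (ha' : euclidNorm a' ≤ Real.sqrt R)
    (hda : euclidNorm (a - a') ≤ 2 * Real.sqrt R * σ) (hdb : euclidNorm (b - b') ≤ 2 * Real.sqrt R * σ) :
    specNorm (vecMulVec a b - vecMulVec a' b') ≤ 4 * R * σ := by
  rw [vecMulVec_diff]
  refine le_trans (specNorm_add_le _ _) ?_
  have h1 := le_trans (specNorm_vecMulVec_le (a - a') b)
    (mul_le_mul hda hb (enorm_nonneg _) (by positivity))
  have h2 := le_trans (specNorm_vecMulVec_le a' (b - b'))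
    (mul_le_mul ha' hdb (enorm_nonneg _) (Real.sqrt_nonneg _))
  have hs : Real.sqrt R * Real.sqrt R = R := Real.mul_self_sqrt hR
  nlinarith [Real.sqrt_nonneg R]

end SGDAux

open SGDAux

/-- (1) Perturbation recursion bound: nonnegative reals with `e_0 = 0` and
`e_{i+1} ≤ e_i + c` satisfy `e_i ≤ c·i`.  (2) Applied to the averaged coupled SGD-RER
iterates: if all states are bounded by `√R`, `2γR < 1`, the coupled states differ by at
most `2√R‖A^u‖`, and both iterations start at `0` within the horizon `T`, then
`‖A_i^{avg} − Ã_i^{avg}‖ ≤ (16γ²R²T² + 8γRT)‖A^u‖` for all `0 ≤ i ≤ B − 1`. -/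
theorem stmt_12 :
    (∀ (e : ℕ → ℝ) (c : ℝ), 0 ≤ c → (∀ i, 0 ≤ e i) → e 0 = 0 →
        (∀ i, e (i + 1) ≤ e i + c) → ∀ i, e i ≤ c * i) ∧
    (∀ (d m B T u : ℕ) (_hm : 0 < m) (_hBT : B ≤ T)
        (γ R : ℝ) (_hγ : 0 < γ) (_hR : 0 ≤ R) (_h2γR : 2 * γ * R < 1)
        (Astar : Matrix (Fin d) (Fin d) ℝ)
        (A At : ℕ → Matrix (Fin d) (Fin d) ℝ)
        (x xt : Fin m → ℕ → (Fin d → ℝ)),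
      (∀ k i, euclidNorm (x k i) ≤ Real.sqrt R) →
      (∀ k i, euclidNorm (xt k i) ≤ Real.sqrt R) →
      (∀ k i, euclidNorm (x k i - xt k i) ≤ 2 * Real.sqrt R * specNorm (Astar ^ u)) →
      A 0 = 0 → At 0 = 0 →
      (∀ i, A (i + 1) = A i - (2 * γ / m) •
        ∑ k, vecMulVec (A i *ᵥ x k i - x k (i + 1)) (x k i)) →
      (∀ i, At (i + 1) = At i - (2 * γ / m) •
        ∑ k, vecMulVec (At i *ᵥ xt k i - xt k (i + 1)) (xt k i)) →
      ∀ i ≤ B, specNorm (A i - At i)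
        ≤ (16 * γ ^ 2 * R ^ 2 * T ^ 2 + 8 * γ * R * T) * specNorm (Astar ^ u)) := by
  constructor
  · intro e c hc he h0 hrec i
    induction i with
    | zero => simp [h0]
    | succ n ih =>
      have h := hrec n
      push_cast
      linarith
  · intro d m B T u hm hBT γ R hγ hR h2γR Astar A At x xt hx hxt hdiff hA0 hAt0 hA hAt
    have hσ0 : 0 ≤ specNorm (Astar ^ u) := specNorm_nonneg _
    set σ := specNorm (Astar ^ u) with hσdef
    have hmR : (0 : ℝ) < m := Nat.cast_pos.mpr hm
    have hm0 : (m : ℝ) ≠ 0 := ne_of_gt hmR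
    have hc0 : (0 : ℝ) ≤ 2 * γ / m := by positivity
    have hsR : Real.sqrt R * Real.sqrt R = R := Real.mul_self_sqrt hR
    have habs : |2 * γ / (m : ℝ)| = 2 * γ / (m : ℝ) := abs_of_nonneg hc0
    have hCx : ∀ i, specNorm ((1 : Matrix (Fin d) (Fin d) ℝ)
        - (2 * γ / (m : ℝ)) • ∑ k, vecMulVec (x k i) (x k i)) ≤ 1 :=
      fun i => contraction hγ hR h2γR hm _ (fun k => hx k i)
    have hCxt : ∀ i, specNorm ((1 : Matrix (Fin d) (Fin d) ℝ)
        - (2 * γ / (m : ℝ)) • ∑ k, vecMulVec (xt k i) (xt k i)) ≤ 1 :=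
      fun i => contraction hγ hR h2γR hm _ (fun k => hxt k i)
    have hQt : ∀ i, specNorm (∑ k, vecMulVec (xt k (i + 1)) (xt k i)) ≤ m * R := by
      intro i
      refine specNorm_sum_le_of fun k => ?_
      refine le_trans (specNorm_vecMulVec_le _ _) ?_
      calc euclidNorm (xt k (i + 1)) * euclidNorm (xt k i)
          ≤ Real.sqrt R * Real.sqrt R :=
            mul_le_mul (hxt k (i + 1)) (hxt k i) (enorm_nonneg _) (Real.sqrt_nonneg _)
        _ = R := hsR
    have hmul : 2 * γ / (m : ℝ) * ((m : ℝ) * R) = 2 * γ * R := by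
      field_simp
    have hAtb : ∀ i, specNorm (At i) ≤ 2 * γ * R * i := by
      intro i
      induction i with
      | zero => simp [hAt0, specNorm_zero]
      | succ n ih =>
        rw [hAt n, step_eq]
        refine le_trans (specNorm_add_le _ _) ?_
        have h1 := specNorm_mul_le (At n)
          ((1 : Matrix (Fin d) (Fin d) ℝ) - (2 * γ / (m : ℝ)) • ∑ k, vecMulVec (xt k n) (xt k n))
        have h2 := hCxt n
        have h3 := specNorm_smul_le (2 * γ / (m : ℝ)) (∑ k, vecMulVec (xt k (n + 1)) (xt k n))
        rw [habs] at h3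
        have h4 := hQt n
        have h5 := specNorm_nonneg (At n)
        have h6 : specNorm (At n) * specNorm ((1 : Matrix (Fin d) (Fin d) ℝ)
            - (2 * γ / (m : ℝ)) • ∑ k, vecMulVec (xt k n) (xt k n)) ≤ 2 * γ * R * n * 1 :=
          mul_le_mul ih h2 (specNorm_nonneg _) (by positivity)
        have h7 : 2 * γ / (m : ℝ) * specNorm (∑ k, vecMulVec (xt k (n + 1)) (xt k n))
            ≤ 2 * γ / (m : ℝ) * ((m : ℝ) * R) := mul_le_mul_of_nonneg_left h4 hc0
        rw [hmul] at h7
        push_cast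
        linarith
    have hPdiff : ∀ n, specNorm ((∑ k, vecMulVec (xt k n) (xt k n))
        - ∑ k, vecMulVec (x k n) (x k n)) ≤ m * (4 * R * σ) := by
      intro n
      rw [← Finset.sum_sub_distrib]
      refine specNorm_sum_le_of fun k => ?_
      refine specNorm_vecMulVec_diff_le hR hσ0 (hxt k n) (hx k n) ?_ ?_ <;>
        · rw [enorm_sub_comm]
          exact hdiff k n
    have hQdiff : ∀ n, specNorm ((∑ k, vecMulVec (x k (n + 1)) (x k n))
        - ∑ k, vecMulVec (xt k (n + 1)) (xt k n)) ≤ m * (4 * R * σ) := by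
      intro n
      rw [← Finset.sum_sub_distrib]
      refine specNorm_sum_le_of fun k => ?_
      exact specNorm_vecMulVec_diff_le hR hσ0 (hx k n) (hxt k (n + 1))
        (hdiff k (n + 1)) (hdiff k n)
    have hmul2 : 2 * γ / (m : ℝ) * ((m : ℝ) * (4 * R * σ)) = 8 * γ * R * σ := by
      field_simp; ring
    have hDrec : ∀ n : ℕ, (n : ℝ) ≤ (T : ℝ) →
        specNorm (A (n + 1) - At (n + 1))
          ≤ specNorm (A n - At n) + (16 * γ ^ 2 * R ^ 2 * T + 8 * γ * R) * σ := by
      intro n hnT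
      have e1 := hA n
      rw [step_eq] at e1
      have e2 := hAt n
      rw [step_eq] at e2
      set c : ℝ := 2 * γ / (m : ℝ) with hcdef
      set P := ∑ k, vecMulVec (x k n) (x k n) with hP
      set Pt := ∑ k, vecMulVec (xt k n) (xt k n) with hPt
      set Q := ∑ k, vecMulVec (x k (n + 1)) (x k n) with hQ
      set Qt := ∑ k, vecMulVec (xt k (n + 1)) (xt k n) with hQt2
      have eD : A (n + 1) - At (n + 1)
          = (A n - At n) * (1 - c • P) + (At n * (c • (Pt - P)) + c • (Q - Qt)) := by
        rw [e1, e2]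
        simp only [mul_sub, sub_mul, smul_sub, mul_smul_comm, mul_one, one_mul]
        abel
      have t1 : specNorm ((A n - At n) * (1 - c • P)) ≤ specNorm (A n - At n) := by
        refine le_trans (specNorm_mul_le _ _) ?_
        have := hCx n
        rw [← hP] at this
        nlinarith [specNorm_nonneg (A n - At n), specNorm_nonneg (1 - c • P)]
      have t2 : specNorm (At n * (c • (Pt - P))) ≤ 16 * γ ^ 2 * R ^ 2 * T * σ := by
        refine le_trans (specNorm_mul_le _ _) ?_
        have hb1 : specNorm (At n) ≤ 2 * γ * R * T := le_trans (hAtb n)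
          (mul_le_mul_of_nonneg_left hnT (by positivity : (0:ℝ) ≤ 2 * γ * R))
        have hb2 : specNorm (c • (Pt - P)) ≤ 8 * γ * R * σ := by
          refine le_trans (specNorm_smul_le _ _) ?_
          rw [hcdef, habs, ← hmul2]
          exact mul_le_mul_of_nonneg_left (hPdiff n) hc0
        nlinarith [specNorm_nonneg (At n), specNorm_nonneg (c • (Pt - P))]
      have t3 : specNorm (c • (Q - Qt)) ≤ 8 * γ * R * σ := by
        refine le_trans (specNorm_smul_le _ _) ?_
        rw [hcdef, habs, ← hmul2]
        exact mul_le_mul_of_nonneg_left (hQdiff n) hc0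
      calc specNorm (A (n + 1) - At (n + 1))
          ≤ specNorm ((A n - At n) * (1 - c • P))
            + specNorm (At n * (c • (Pt - P)) + c • (Q - Qt)) := by
            rw [eD]; exact specNorm_add_le _ _
        _ ≤ specNorm ((A n - At n) * (1 - c • P))
            + (specNorm (At n * (c • (Pt - P))) + specNorm (c • (Q - Qt))) := by
            have := specNorm_add_le (At n * (c • (Pt - P))) (c • (Q - Qt))
            linarith
        _ ≤ specNorm (A n - At n) + (16 * γ ^ 2 * R ^ 2 * T + 8 * γ * R) * σ := by
            nlinarith
    have hmain : ∀ i, i ≤ B → specNorm (A i - At i)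
        ≤ ((16 * γ ^ 2 * R ^ 2 * T + 8 * γ * R) * σ) * i := by
      intro i
      induction i with
      | zero => intro _; simp [hA0, hAt0, specNorm_zero]
      | succ n ih =>
        intro hn
        have hnB : n ≤ B := Nat.le_of_succ_le hn
        have hnT : (n : ℝ) ≤ (T : ℝ) := by
          exact_mod_cast le_trans hnB hBT
        have h1 := hDrec n hnT
        have h2 := ih hnB
        push_cast
        nlinarith
    intro i hiB
    have h1 := hmain i hiB
    have hiT : (i : ℝ) ≤ (T : ℝ) := by exact_mod_cast le_trans hiB hBT
    have hfac : 0 ≤ (16 * γ ^ 2 * R ^ 2 * T + 8 * γ * R) * σ := by positivity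
    nlinarith
end

section
/- If P is symmetric doubly stochastic with positive diagonal entries and the associated graph is connected, then the second largest singular value β of P is strictly less than 1. -/
open Matrix Finset

lemma my_sq_identity {m : ℕ} (P : Matrix (Fin m) (Fin m) ℝ)
    (hrow : ∀ i, ∑ j, P i j = 1) (hcol : ∀ j, ∑ i, P i j = 1)
    (v : Fin m → ℝ) :
    ∑ j, ∑ i, ∑ k, P j i * P j k * (v i - v k) ^ 2
      = 2 * ((∑ i, (v i) ^ 2) - ∑ j, (P.mulVec v j) ^ 2) := by
  have hj : ∀ j, ∑ i, ∑ k, P j i * P j k * (v i - v k) ^ 2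
      = 2 * (∑ i, P j i * (v i) ^ 2) - 2 * (∑ i, P j i * v i) ^ 2 := by
    intro j
    have inner : ∀ i, ∑ k, P j k * (v i - v k) ^ 2
        = v i ^ 2 - 2 * v i * (∑ k, P j k * v k) + (∑ k, P j k * v k ^ 2) := by
      intro i
      have h : ∀ k, P j k * (v i - v k) ^ 2
          = v i ^ 2 * P j k - 2 * v i * (P j k * v k) + P j k * v k ^ 2 := fun k => by ring
      simp only [h, Finset.sum_add_distrib, Finset.sum_sub_distrib, ← Finset.mul_sum, hrow j]
      ring
    have step1 : ∑ i, ∑ k, P j i * P j k * (v i - v k) ^ 2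
        = ∑ i, P j i * (v i ^ 2 - 2 * v i * (∑ k, P j k * v k) + (∑ k, P j k * v k ^ 2)) := by
      refine Finset.sum_congr rfl fun i _ => ?_
      simp only [mul_assoc, ← Finset.mul_sum]
      rw [inner i]
      ring
    rw [step1]
    have h2 : ∀ i, P j i * (v i ^ 2 - 2 * v i * (∑ k, P j k * v k) + (∑ k, P j k * v k ^ 2))
        = P j i * v i ^ 2 - (P j i * v i) * (2 * (∑ k, P j k * v k))
          + P j i * (∑ k, P j k * v k ^ 2) := fun i => by ring
    simp only [h2, Finset.sum_add_distrib, Finset.sum_sub_distrib, ← Finset.sum_mul, hrow j]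
    ring
  simp only [hj, Finset.sum_sub_distrib, ← Finset.mul_sum]
  have swap : ∑ j, ∑ i, P j i * v i ^ 2 = ∑ i, v i ^ 2 := by
    rw [Finset.sum_comm]
    refine Finset.sum_congr rfl fun i _ => ?_
    rw [← Finset.sum_mul, hcol i, one_mul]
  rw [swap]
  have hmv : ∀ j, P.mulVec v j = ∑ i, P j i * v i := fun j => rfl
  simp only [hmv]
  ring

lemma my_weak {m : ℕ} (P : Matrix (Fin m) (Fin m) ℝ)
    (hnonneg : ∀ i j, 0 ≤ P i j)
    (hrow : ∀ i, ∑ j, P i j = 1) (hcol : ∀ j, ∑ i, P i j = 1)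
    (v : Fin m → ℝ) :
    ∑ j, (P.mulVec v j) ^ 2 ≤ ∑ i, (v i) ^ 2 := by
  have hS : 0 ≤ ∑ j, ∑ i, ∑ k, P j i * P j k * (v i - v k) ^ 2 := by
    refine Finset.sum_nonneg fun j _ => Finset.sum_nonneg fun i _ => Finset.sum_nonneg
      fun k _ => mul_nonneg (mul_nonneg (hnonneg _ _) (hnonneg _ _)) (sq_nonneg _)
  have := my_sq_identity P hrow hcol v
  linarith

lemma my_strict {m : ℕ} (hm : 0 < m) (P : Matrix (Fin m) (Fin m) ℝ)
    (hnonneg : ∀ i j, 0 ≤ P i j)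
    (hrow : ∀ i, ∑ j, P i j = 1) (hcol : ∀ j, ∑ i, P i j = 1)
    (hdiag : ∀ i, 0 < P i i)
    (hconn : ∀ i j : Fin m, Relation.ReflTransGen (fun a b => 0 < P a b) i j)
    (v : Fin m → ℝ) (hv0 : (∑ i, v i) = 0) (hvne : ∑ i, (v i) ^ 2 ≠ 0) :
    ∑ j, (P.mulVec v j) ^ 2 < ∑ i, (v i) ^ 2 := by
  rcases lt_or_eq_of_le (my_weak P hnonneg hrow hcol v) with h | h
  · exact h
  exfalso
  have hid := my_sq_identity P hrow hcol v
  have hS : ∑ j, ∑ i, ∑ k, P j i * P j k * (v i - v k) ^ 2 = 0 := by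
    rw [hid, h]; ring
  have hterm : ∀ j ∈ (univ : Finset (Fin m)), ∀ i ∈ (univ : Finset (Fin m)),
      ∀ k ∈ (univ : Finset (Fin m)), P j i * P j k * (v i - v k) ^ 2 = 0 := by
    have h1 := (Finset.sum_eq_zero_iff_of_nonneg (fun j _ =>
      Finset.sum_nonneg fun i _ => Finset.sum_nonneg fun k _ => mul_nonneg (mul_nonneg (hnonneg _ _) (hnonneg _ _)) (sq_nonneg _))).mp hS
    intro j hj i hi k hk
    have h2 := (Finset.sum_eq_zero_iff_of_nonneg (fun i _ =>
      Finset.sum_nonneg fun k _ => mul_nonneg (mul_nonneg (hnonneg _ _) (hnonneg _ _)) (sq_nonneg _))).mp (h1 j hj) i hi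
    exact (Finset.sum_eq_zero_iff_of_nonneg (fun k _ => mul_nonneg (mul_nonneg (hnonneg _ _) (hnonneg _ _)) (sq_nonneg _))).mp h2 k hk
  have hedge : ∀ a b : Fin m, 0 < P a b → v b = v a := by
    intro a b hab
    have h0 := hterm a (mem_univ a) b (mem_univ b) a (mem_univ a)
    have hpos : 0 < P a b * P a a := mul_pos hab (hdiag a)
    have : (v b - v a) ^ 2 = 0 := by
      by_contra hne
      have : 0 < (v b - v a) ^ 2 := lt_of_le_of_ne (sq_nonneg _) (Ne.symm hne)
      nlinarith
    have := pow_eq_zero_iff (n := 2) (by norm_num) |>.mp this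
    linarith [sub_eq_zero.mp this]
  have hconst : ∀ i : Fin m, v i = v ⟨0, hm⟩ := by
    intro i
    have h := hconn ⟨0, hm⟩ i
    induction h with
    | refl => rfl
    | tail _ hbc ih => rw [← ih]; exact hedge _ _ hbc
  have hsum : ∑ i, v i = (m : ℝ) * v ⟨0, hm⟩ := by
    rw [Finset.sum_congr rfl fun i _ => hconst i]
    simp [Finset.card_univ, mul_comm]
  have hv00 : v ⟨0, hm⟩ = 0 := by
    rw [hsum] at hv0
    have : (m : ℝ) ≠ 0 := Nat.cast_ne_zero.mpr hm.ne'
    exact (mul_eq_zero.mp hv0).resolve_left this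
  apply hvne
  refine Finset.sum_eq_zero fun i _ => ?_
  rw [hconst i, hv00]; ring

/-- If `P` is symmetric doubly stochastic with positive diagonal and connected
association graph, then its second largest singular value is strictly less than 1:
there is `β < 1` contracting every vector orthogonal to the all-ones vector
(`‖P v‖ ≤ β ‖v‖` whenever `∑ v = 0`). -/
theorem stmt_17 {m : ℕ} (hm : 0 < m) (P : Matrix (Fin m) (Fin m) ℝ)
    (hsym : Pᵀ = P) (hnonneg : ∀ i j, 0 ≤ P i j)
    (hrow : ∀ i, ∑ j, P i j = 1) (hcol : ∀ j, ∑ i, P i j = 1)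
    (hdiag : ∀ i, 0 < P i i)
    (hconn : ∀ i j : Fin m, Relation.ReflTransGen (fun a b => 0 < P a b) i j) :
    ∃ β : ℝ, 0 ≤ β ∧ β < 1 ∧
      ∀ v : Fin m → ℝ, (∑ i, v i) = 0 →
        Real.sqrt (∑ j, (P.mulVec v j) ^ 2) ≤ β * Real.sqrt (∑ j, (v j) ^ 2) := by
  classical
  set g : (Fin m → ℝ) → ℝ := fun v => ∑ j, (P.mulVec v j) ^ 2 with hg
  set B : Set (Fin m → ℝ) := {v | (∑ i, v i) = 0 ∧ (∑ i, (v i) ^ 2) ≤ 1} with hB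
  have hgc : Continuous g := by
    apply continuous_finset_sum
    intro j _
    have : Continuous fun v : Fin m → ℝ => P.mulVec v j := by
      simp only [Matrix.mulVec, dotProduct]
      exact continuous_finset_sum _ fun i _ => (continuous_const.mul (continuous_apply i))
    exact this.pow 2
  have hBclosed : IsClosed B := by
    have h1 : IsClosed {v : Fin m → ℝ | (∑ i, v i) = 0} :=
      isClosed_eq (continuous_finset_sum _ fun i _ => continuous_apply i) continuous_const
    have h2 : IsClosed {v : Fin m → ℝ | (∑ i, (v i) ^ 2) ≤ 1} :=
      isClosed_le (continuous_finset_sum _ fun i _ => (continuous_apply i).pow 2)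
        continuous_const
    exact h1.inter h2
  have hBbdd : Bornology.IsBounded B := by
    refine (Metric.isBounded_closedBall (x := (0 : Fin m → ℝ)) (r := 1)).subset ?_
    intro v hv
    rw [Metric.mem_closedBall, dist_zero_right]
    refine (pi_norm_le_iff_of_nonneg zero_le_one).mpr fun i => ?_
    rw [Real.norm_eq_abs, ← Real.sqrt_one, ← Real.sqrt_sq_eq_abs]
    refine Real.sqrt_le_sqrt ?_
    calc v i ^ 2 ≤ ∑ k, (v k) ^ 2 :=
          Finset.single_le_sum (fun k _ => sq_nonneg (v k)) (mem_univ i)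
      _ ≤ 1 := hv.2
  have hBcompact : IsCompact B := Metric.isCompact_of_isClosed_isBounded hBclosed hBbdd
  have h0B : (0 : Fin m → ℝ) ∈ B := by constructor <;> simp
  obtain ⟨v₀, hv₀B, hmax⟩ := hBcompact.exists_isMaxOn ⟨0, h0B⟩ hgc.continuousOn
  set M : ℝ := g v₀ with hM
  have hM0 : 0 ≤ M := by
    have := hmax h0B
    simp only [g, Matrix.mulVec_zero] at this ⊢
    simpa using this
  have hM1 : M < 1 := by
    by_cases h0 : ∑ i, (v₀ i) ^ 2 = 0
    · have : M ≤ 0 := by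
        have := my_weak P hnonneg hrow hcol v₀
        rw [h0] at this; exact this
      linarith
    · have h1 := my_strict hm P hnonneg hrow hcol hdiag hconn v₀ hv₀B.1 h0
      exact lt_of_lt_of_le h1 hv₀B.2
  -- key scaled bound
  have hkey : ∀ v : Fin m → ℝ, (∑ i, v i) = 0 → g v ≤ M * ∑ i, (v i) ^ 2 := by
    intro v hv0
    by_cases hz : ∑ i, (v i) ^ 2 = 0
    · have hvz : v = 0 := by
        funext i
        have := (Finset.sum_eq_zero_iff_of_nonneg (fun k _ => sq_nonneg (v k))).mp hz i
          (mem_univ i)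
        have := pow_eq_zero_iff (n := 2) (by norm_num) |>.mp this
        simpa using this
      rw [hvz]
      simp only [g, Matrix.mulVec_zero, Pi.zero_apply]
      simp
    · have hpos : 0 < ∑ i, (v i) ^ 2 :=
        lt_of_le_of_ne (Finset.sum_nonneg fun k _ => sq_nonneg _) (Ne.symm hz)
      set t : ℝ := Real.sqrt (∑ i, (v i) ^ 2) with ht
      have htpos : 0 < t := Real.sqrt_pos.mpr hpos
      have ht2 : t ^ 2 = ∑ i, (v i) ^ 2 := Real.sq_sqrt hpos.le
      set w : Fin m → ℝ := t⁻¹ • v with hw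
      have hwB : w ∈ B := by
        constructor
        · simp only [hw, Pi.smul_apply, smul_eq_mul, ← Finset.mul_sum, hv0, mul_zero]
        · have : ∑ i, (w i) ^ 2 = t⁻¹ ^ 2 * ∑ i, (v i) ^ 2 := by
            simp only [hw, Pi.smul_apply, smul_eq_mul, mul_pow, ← Finset.mul_sum]
          rw [this, ← ht2]
          field_simp
          exact le_rfl
      have hgw : g w = t⁻¹ ^ 2 * g v := by
        simp only [g, hw, Matrix.mulVec_smul, Pi.smul_apply, smul_eq_mul, mul_pow,
          ← Finset.mul_sum]
      have := hmax hwB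
      simp only [Set.mem_setOf_eq] at this
      rw [hgw] at this
      have h2 : g v ≤ M * t ^ 2 := by
        have htne : t ^ 2 ≠ 0 := by positivity
        have := mul_le_mul_of_nonneg_left this (le_of_lt (by positivity : (0:ℝ) < t ^ 2))
        calc g v = t ^ 2 * (t⁻¹ ^ 2 * g v) := by field_simp
          _ ≤ t ^ 2 * M := this
          _ = M * t ^ 2 := mul_comm _ _
      rwa [ht2] at h2
  refine ⟨Real.sqrt M, Real.sqrt_nonneg M, ?_, ?_⟩
  · calc Real.sqrt M < Real.sqrt 1 := Real.sqrt_lt_sqrt hM0 hM1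
      _ = 1 := Real.sqrt_one
  · intro v hv0
    have h1 := hkey v hv0
    calc Real.sqrt (∑ j, (P.mulVec v j) ^ 2) ≤ Real.sqrt (M * ∑ i, (v i) ^ 2) :=
          Real.sqrt_le_sqrt h1
      _ = Real.sqrt M * Real.sqrt (∑ j, (v j) ^ 2) := Real.sqrt_mul hM0 _
end
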